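/- arXiv:0906.2039 — 7 statements merged into one kernel-verified Lean document; each statement's English description precedes it below -/
import Mathlib

section
/- Desnanot–Jacobi identity: Let M be an n×n matrix over a commutative ring with n ≥ 2, and let j₁ < j₂ be row indices and k₁ < k₂ be column indices. Write D[j's; k's] for the minor determinant of M with the indicated rows and columns deleted. Then det(M) · D[j₁,j₂; k₁,k₂] = D[j₁; k₁] · D[j₂; k₂] − D[j₁; k₂] · D[j₂; k₁]. -/
/-!
Let `C` be the identity matrix with columns `k₁, K₂` replaced by the columns `j₁, J₂` of
`adjugate M`. Then `M * C` is `M` with those two columns replaced by `det M • e_{j₁}` and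
`det M • e_{J₂}`, so `det (M * C) = ± (det M)² D[j₁,J₂;k₁,K₂]`. On the other hand `C` is a
rank-two perturbation of the identity, so `det C` is a `2 × 2` minor of `adjugate M`, namely
`± (D[j₁;k₁] D[J₂;K₂] - D[j₁;K₂] D[J₂;k₁])`. Comparing the two gives the identity multiplied
by `det M`; this factor cancels for the generic matrix over `ℤ[X_ij]`, and the identity then
specialises to any `M`.
-/

open Matrix

namespace Matrix

theorem submatrix_succAbove_updateCol_succAbove {α m l : Type*} {n : ℕ}
    (M : Matrix m (Fin (n + 1)) α) (f : l → m) (k₁ : Fin (n + 1)) (k₂ : Fin n) (v : m → α) :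
    (M.updateCol (k₁.succAbove k₂) v).submatrix f k₁.succAbove =
      (M.submatrix f k₁.succAbove).updateCol k₂ (v ∘ f) := by
  ext a b
  simp [updateCol_apply]

variable {R : Type*} [CommRing R]

theorem det_updateCol_updateCol_one {ι : Type*} [Fintype ι] [DecidableEq ι] {k k' : ι}
    (h : k ≠ k') (u v : ι → R) :
    (((1 : Matrix ι ι R).updateCol k u).updateCol k' v).det = u k * v k' - u k' * v k := by
  let A : Matrix ι (Fin 2) R :=
    of fun i => ![u i - (1 : Matrix ι ι R) i k, v i - (1 : Matrix ι ι R) i k']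
  let B : Matrix (Fin 2) ι R := of ![(1 : Matrix ι ι R) k, (1 : Matrix ι ι R) k']
  have hAB : ((1 : Matrix ι ι R).updateCol k u).updateCol k' v = 1 + A * B := by
    ext i c
    simp only [A, B, add_apply, mul_apply, Fin.sum_univ_two, of_apply, cons_val_zero,
      cons_val_one, updateCol_apply]
    rcases eq_or_ne c k' with rfl | hc'
    · simp [one_apply, h]
    rcases eq_or_ne c k with rfl | hc
    · simp [one_apply, hc', hc'.symm]
    · simp [one_apply, hc, hc', hc.symm, hc'.symm]
  have hBA : 1 + B * A = !![u k, v k; u k', v k'] := by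
    ext a b
    simp only [A, B, add_apply, mul_apply, of_apply]
    fin_cases a <;> fin_cases b <;> simp [one_apply, h, h.symm]
  rw [hAB, det_one_add_mul_comm, hBA, det_fin_two_of]
  ring

variable {n : ℕ}

theorem det_updateCol_single (M : Matrix (Fin (n + 1)) (Fin (n + 1)) R) (i j : Fin (n + 1))
    (x : R) :
    (M.updateCol j (Pi.single i x)).det =
      (-1) ^ (i + j : ℕ) * x * (M.submatrix i.succAbove j.succAbove).det := by
  rw [det_succ_column _ j, Fintype.sum_eq_single i, submatrix_updateCol_succAbove]
  · simp
  · intro i' hi'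
    simp [hi']

theorem det_updateCol_single_updateCol_single (M : Matrix (Fin (n + 2)) (Fin (n + 2)) R)
    (j₁ k₁ : Fin (n + 2)) (j₂ k₂ : Fin (n + 1)) (x y : R) :
    ((M.updateCol (k₁.succAbove k₂) (Pi.single (j₁.succAbove j₂) x)).updateCol k₁
        (Pi.single j₁ y)).det =
      (-1) ^ (j₁ + k₁ + (j₂ + k₂) : ℕ) * (y * x) *
        (M.submatrix (j₁.succAbove ∘ j₂.succAbove) (k₁.succAbove ∘ k₂.succAbove)).det := by
  have hsingle : Pi.single (j₁.succAbove j₂) x ∘ j₁.succAbove = Pi.single j₂ x := by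
    funext i
    simp [Pi.single_apply]
  rw [det_updateCol_single, submatrix_succAbove_updateCol_succAbove, hsingle,
    det_updateCol_single, submatrix_submatrix, pow_add]
  ring

theorem det_mul_desnanot_jacobi (M : Matrix (Fin (n + 2)) (Fin (n + 2)) R)
    (j₁ k₁ : Fin (n + 2)) (j₂ k₂ : Fin (n + 1))
    (hj : (j₁ : ℕ) ≤ (j₂ : ℕ)) (hk : (k₁ : ℕ) ≤ (k₂ : ℕ)) :
    M.det * (M.det *
      (M.submatrix (j₁.succAbove ∘ j₂.succAbove) (k₁.succAbove ∘ k₂.succAbove)).det) =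
      M.det * ((M.submatrix j₁.succAbove k₁.succAbove).det *
        (M.submatrix (j₁.succAbove j₂).succAbove (k₁.succAbove k₂).succAbove).det -
      (M.submatrix j₁.succAbove (k₁.succAbove k₂).succAbove).det *
        (M.submatrix (j₁.succAbove j₂).succAbove k₁.succAbove).det) := by
  set J₂ := j₁.succAbove j₂ with hJ₂
  set K₂ := k₁.succAbove k₂ with hK₂
  have hJ₂_val : (J₂ : ℕ) = j₂ + 1 := by
    rw [hJ₂, Fin.succAbove_of_le_castSucc _ _ (Fin.le_def.2 hj), Fin.val_succ]
  have hK₂_val : (K₂ : ℕ) = k₂ + 1 := by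
    rw [hK₂, Fin.succAbove_of_le_castSucc _ _ (Fin.le_def.2 hk), Fin.val_succ]
  -- `cramer M (Pi.single j 1)` is column `j` of `adjugate M`.
  let C := ((1 : Matrix _ _ R).updateCol K₂ (cramer M (Pi.single J₂ 1))).updateCol k₁
    (cramer M (Pi.single j₁ 1))
  have hMC : M * C = (M.updateCol K₂ (Pi.single J₂ M.det)).updateCol k₁ (Pi.single j₁ M.det) := by
    simp only [C, mul_updateCol, mul_one, mulVec_cramer, ← Pi.single_smul', smul_eq_mul, mul_one]
  have hcramer (j k : Fin (n + 2)) :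
      cramer M (Pi.single j 1) k =
        (-1) ^ (j + k : ℕ) * (M.submatrix j.succAbove k.succAbove).det := by
    rw [cramer_apply, det_updateCol_single, mul_one]
  have hdet := det_mul M C
  rw [hMC, det_updateCol_single_updateCol_single,
    det_updateCol_updateCol_one (Fin.succAbove_ne k₁ k₂), hcramer, hcramer, hcramer, hcramer,
    hJ₂_val, hK₂_val] at hdet
  -- Since `J₂ = j₂ + 1` and `K₂ = k₂ + 1`, every term of `hdet` carries the same sign.
  refine ((isUnit_neg_one (α := R)).pow (j₁ + k₁ + (j₂ + k₂) : ℕ)).mul_left_cancel ?_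
  linear_combination hdet

end Matrix

/-- **Desnanot–Jacobi identity.** For an `(n+2)×(n+2)` matrix `M` over a commutative ring,
with rows `j₁ < J₂` (encoded as `J₂ = j₁.succAbove j₂` with `(j₁ : ℕ) ≤ (j₂ : ℕ)`) and
columns `k₁ < K₂` similarly,
`det M * D[j₁,J₂;k₁,K₂] = D[j₁;k₁]·D[J₂;K₂] − D[j₁;K₂]·D[J₂;k₁]`. -/
theorem desnanot_jacobi {R : Type*} [CommRing R] {n : ℕ}
    (M : Matrix (Fin (n + 2)) (Fin (n + 2)) R)
    (j₁ k₁ : Fin (n + 2)) (j₂ k₂ : Fin (n + 1))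
    (hj : (j₁ : ℕ) ≤ (j₂ : ℕ)) (hk : (k₁ : ℕ) ≤ (k₂ : ℕ)) :
    M.det * (M.submatrix (j₁.succAbove ∘ j₂.succAbove) (k₁.succAbove ∘ k₂.succAbove)).det =
      (M.submatrix j₁.succAbove k₁.succAbove).det *
        (M.submatrix (j₁.succAbove j₂).succAbove (k₁.succAbove k₂).succAbove).det -
      (M.submatrix j₁.succAbove (k₁.succAbove k₂).succAbove).det *
        (M.submatrix (j₁.succAbove j₂).succAbove k₁.succAbove).det := by
  let X := mvPolynomialX (Fin (n + 2)) (Fin (n + 2)) ℤ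
  have hX := mul_left_cancel₀ (det_mvPolynomialX_ne_zero _ ℤ)
    (det_mul_desnanot_jacobi X j₁ k₁ j₂ k₂ hj hk)
  let f := MvPolynomial.aeval (R := ℤ) fun p : Fin (n + 2) × Fin (n + 2) => M p.1 p.2
  have hXM : X.map f = M := mvPolynomialX_mapMatrix_aeval ℤ M
  simpa only [map_mul, map_sub, AlgHom.map_det, AlgHom.mapMatrix_apply, ← submatrix_map, hXM]
    using congrArg f hX
end

section
/- Plücker three-term identity (column version): Let A be an n×(n+2) matrix over a commutative ring, and for column indices k₁ < k₂ < k₃ < k₄ let D[k,k'] denote the determinant of the n×n matrix obtained from A by deleting columns k and k'. Then D[k₁,k₂]·D[k₃,k₄] − D[k₁,k₃]·D[k₂,k₄] + D[k₁,k₄]·D[k₂,k₃] = 0. -/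
/-! Let `B` be `A` with column `k₄` deleted. The signed maximal minors `(-1)ʲ det B₍ⱼ₎` of the
`n × (n + 1)` matrix `B` form a vector in its kernel (Laplace expansion of a determinant with a
repeated row). Pair this relation with the linear form `x ↦ det [x | A with columns k₁, k₂, k₃
deleted]`: it kills every column of `B` except `k₁, k₂, k₃`, and on those it equals
`D[k₂,k₃]`, `D[k₁,k₃]`, `D[k₁,k₂]` up to the sign of moving the first column into place. The
relation becomes the three-term identity. -/

/-- The strictly monotone map `Fin n → Fin (n + 2)` skipping the indices `a` and `b`
(for `a < b`). -/
def skip2 {n : ℕ} (a b : Fin (n + 2)) (i : Fin n) : Fin (n + 2) :=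
  if (i : ℕ) < (a : ℕ) then ⟨(i : ℕ), by have := i.isLt; omega⟩
  else if (i : ℕ) + 1 < (b : ℕ) then ⟨(i : ℕ) + 1, by have := i.isLt; omega⟩
  else ⟨(i : ℕ) + 2, by have := i.isLt; omega⟩

open Matrix

namespace Matrix

variable {R : Type*} [CommRing R]

theorem mulVec_signedMaxMinors_eq_zero {n : ℕ} (B : Matrix (Fin n) (Fin (n + 1)) R) :
    B *ᵥ (fun j => (-1) ^ (j : ℕ) * (B.submatrix id j.succAbove).det) = 0 := by
  ext i
  calc (B *ᵥ fun j => (-1) ^ (j : ℕ) * (B.submatrix id j.succAbove).det) i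
      = (of (vecCons (B i) B)).det := by
        rw [det_succ_row_zero, mulVec, dotProduct]
        exact Finset.sum_congr rfl fun j _ => by rw [mul_left_comm, ← mul_assoc]; rfl
    _ = 0 := det_zero_of_row_eq (Fin.succ_ne_zero i).symm rfl

theorem det_of_vecCons_eq_dotProduct {m : ℕ} (N : Matrix (Fin (m + 1)) (Fin m) R)
    (v : Fin (m + 1) → R) :
    (of fun i => vecCons (v i) (N i)).det =
      (fun i : Fin (m + 1) => (-1) ^ (i : ℕ) * (N.submatrix i.succAbove id).det) ⬝ᵥ v := by
  rw [det_succ_column_zero, dotProduct]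
  refine Finset.sum_congr rfl fun i _ => ?_
  rw [mul_right_comm]
  rfl

theorem det_of_vecCons_eq_neg_one_pow_mul_det {m : ℕ} {ι : Type*}
    {A : Matrix (Fin (m + 1)) ι R} {f : Fin (m + 1) → ι} {p : Fin (m + 1)} {k : ι}
    {g : Fin m → ι} (hk : f p = k) (hg : f ∘ p.succAbove = g) :
    (of fun i => vecCons (A i k) (A.submatrix id g i)).det =
      (-1) ^ (p : ℕ) * (A.submatrix id f).det := by
  subst hk hg
  set M := A.submatrix id f
  rw [det_of_vecCons_eq_dotProduct, det_succ_column M p, Finset.mul_sum]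
  refine Finset.sum_congr rfl fun i _ => ?_
  have hp : (-1 : R) ^ (p : ℕ) * (-1) ^ (p : ℕ) = 1 := by
    rw [← mul_pow, neg_one_mul, neg_neg, one_pow]
  change (-1) ^ (i : ℕ) * (M.submatrix i.succAbove p.succAbove).det * M i p = _
  rw [pow_add]
  linear_combination -(-1 : R) ^ (i : ℕ) * M i p * (M.submatrix i.succAbove p.succAbove).det * hp

theorem sum_signedMaxMinor_mul_det_of_vecCons_eq_zero {m : ℕ}
    (B : Matrix (Fin (m + 1)) (Fin (m + 2)) R) (N : Matrix (Fin (m + 1)) (Fin m) R) :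
    ∑ j : Fin (m + 2), (-1) ^ (j : ℕ) * (B.submatrix id j.succAbove).det *
      (of fun i => vecCons (B i j) (N i)).det = 0 := by
  set g := fun i : Fin (m + 1) => (-1) ^ (i : ℕ) * (N.submatrix i.succAbove id).det
  calc _ = (g ᵥ* B) ⬝ᵥ fun j => (-1) ^ (j : ℕ) * (B.submatrix id j.succAbove).det := by
        simp only [det_of_vecCons_eq_dotProduct, dotProduct, vecMul]
        exact Finset.sum_congr rfl fun j _ => by ring
    _ = 0 := by rw [← dotProduct_mulVec, mulVec_signedMaxMinors_eq_zero, dotProduct_zero]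

end Matrix

def skip3 {n : ℕ} (a b c : Fin (n + 3)) (i : Fin n) : Fin (n + 3) :=
  if (i : ℕ) < (a : ℕ) then ⟨(i : ℕ), by have := i.isLt; omega⟩
  else if (i : ℕ) + 1 < (b : ℕ) then ⟨(i : ℕ) + 1, by have := i.isLt; omega⟩
  else if (i : ℕ) + 2 < (c : ℕ) then ⟨(i : ℕ) + 2, by have := i.isLt; omega⟩
  else ⟨(i : ℕ) + 3, by have := i.isLt; omega⟩

section Skip

variable {n : ℕ}

theorem skip2_eq_succAbove_comp_succAbove {a b : Fin (n + 2)} (hab : a < b) :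
    skip2 a b = b.succAbove ∘ (a.castPred (Fin.ne_last_of_lt hab)).succAbove := by
  funext i
  ext
  simp only [Function.comp_apply, skip2, Fin.succAbove, Fin.lt_def, Fin.val_castSucc,
    Fin.coe_castPred, Fin.val_succ, apply_ite Fin.val]
  split_ifs <;> omega

variable {a b c : Fin (n + 3)} (hab : a < b) (hbc : b < c)
include hab hbc

theorem skip2_comp_succAbove_fst :
    skip2 b c ∘ (⟨a, by omega⟩ : Fin (n + 1)).succAbove = skip3 a b c := by
  funext i
  ext
  simp only [Function.comp_apply, skip2, skip3, Fin.succAbove, Fin.lt_def, Fin.val_castSucc,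
    Fin.val_succ, apply_ite Fin.val]
  split_ifs <;> omega

theorem skip2_comp_succAbove_snd :
    skip2 a c ∘ (⟨b - 1, by omega⟩ : Fin (n + 1)).succAbove = skip3 a b c := by
  funext i
  ext
  simp only [Function.comp_apply, skip2, skip3, Fin.succAbove, Fin.lt_def, Fin.val_castSucc,
    Fin.val_succ, apply_ite Fin.val]
  split_ifs <;> omega

theorem skip2_comp_succAbove_thd :
    skip2 a b ∘ (⟨c - 2, by omega⟩ : Fin (n + 1)).succAbove = skip3 a b c := by
  funext i
  ext
  simp only [Function.comp_apply, skip2, skip3, Fin.succAbove, Fin.lt_def, Fin.val_castSucc,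
    Fin.val_succ, apply_ite Fin.val]
  split_ifs <;> omega

theorem skip2_apply_fst : skip2 b c ⟨a, by omega⟩ = a := by
  ext
  simp only [skip2, apply_ite Fin.val]
  split_ifs <;> omega

theorem skip2_apply_snd : skip2 a c ⟨b - 1, by omega⟩ = b := by
  ext
  simp only [skip2, apply_ite Fin.val]
  split_ifs <;> omega

theorem skip2_apply_thd : skip2 a b ⟨c - 2, by omega⟩ = c := by
  ext
  simp only [skip2, apply_ite Fin.val]
  split_ifs <;> omega

theorem exists_skip3_eq {x : Fin (n + 3)} (ha : x ≠ a) (hb : x ≠ b) (hc : x ≠ c) :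
    ∃ i, skip3 a b c i = x := by
  rw [Ne, Fin.ext_iff] at ha hb hc
  refine ⟨⟨if x < a then x else if x < b then x - 1 else if x < c then x - 2 else x - 3,
    by split_ifs <;> omega⟩, ?_⟩
  ext
  simp only [skip3, apply_ite Fin.val]
  split_ifs <;> omega

end Skip

section Pluecker

variable {R : Type*} [CommRing R]

theorem det_of_vecCons_submatrix_skip3_eq_zero {m : ℕ} (A : Matrix (Fin (m + 1)) (Fin (m + 3)) R)
    {a b c x : Fin (m + 3)} (hab : a < b) (hbc : b < c) (ha : x ≠ a) (hb : x ≠ b) (hc : x ≠ c) :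
    (of fun i => vecCons (A i x) (A.submatrix id (skip3 a b c) i)).det = 0 := by
  obtain ⟨j, hj⟩ := exists_skip3_eq hab hbc ha hb hc
  exact det_zero_of_column_eq (Fin.succ_ne_zero j).symm fun i => by simp [hj]

theorem pluecker_columns_signed {m : ℕ} (A : Matrix (Fin (m + 1)) (Fin (m + 3)) R)
    {k₁ k₂ k₃ k₄ : Fin (m + 3)} (h12 : k₁ < k₂) (h23 : k₂ < k₃) (h34 : k₃ < k₄) :
    (-1) ^ (k₁ : ℕ) * (A.submatrix id (skip2 k₁ k₄)).det *
        ((-1) ^ (k₁ : ℕ) * (A.submatrix id (skip2 k₂ k₃)).det) +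
      ((-1) ^ (k₂ : ℕ) * (A.submatrix id (skip2 k₂ k₄)).det *
        ((-1) ^ ((k₂ : ℕ) - 1) * (A.submatrix id (skip2 k₁ k₃)).det) +
      (-1) ^ (k₃ : ℕ) * (A.submatrix id (skip2 k₃ k₄)).det *
        ((-1) ^ ((k₃ : ℕ) - 2) * (A.submatrix id (skip2 k₁ k₂)).det)) = 0 := by
  have h13 := h12.trans h23
  have h24 := h23.trans h34
  have h14 := h13.trans h34
  have hp₁ := Fin.succAbove_castPred_of_lt _ _ h14
  have hp₂ := Fin.succAbove_castPred_of_lt _ _ h24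
  have hp₃ := Fin.succAbove_castPred_of_lt _ _ h34
  have key := sum_signedMaxMinor_mul_det_of_vecCons_eq_zero (A.submatrix id k₄.succAbove)
    (A.submatrix id (skip3 k₁ k₂ k₃))
  rw [← Finset.sum_subset (Finset.subset_univ
      {k₁.castPred (Fin.ne_last_of_lt h14), k₂.castPred (Fin.ne_last_of_lt h24),
        k₃.castPred (Fin.ne_last_of_lt h34)}),
    Finset.sum_insert (by simp [h12.ne, h13.ne]), Finset.sum_pair (by simp [h23.ne])] at key
  · simp only [submatrix_apply, id_eq, submatrix_submatrix, Function.comp_id, hp₁, hp₂, hp₃,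
      Fin.coe_castPred] at key
    rwa [← skip2_eq_succAbove_comp_succAbove h14, ← skip2_eq_succAbove_comp_succAbove h24,
      ← skip2_eq_succAbove_comp_succAbove h34,
      det_of_vecCons_eq_neg_one_pow_mul_det (skip2_apply_fst h12 h23)
        (skip2_comp_succAbove_fst h12 h23),
      det_of_vecCons_eq_neg_one_pow_mul_det (skip2_apply_snd h12 h23)
        (skip2_comp_succAbove_snd h12 h23),
      det_of_vecCons_eq_neg_one_pow_mul_det (skip2_apply_thd h12 h23)
        (skip2_comp_succAbove_thd h12 h23)] at key
  · intro j _ hj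
    simp only [Finset.mem_insert, Finset.mem_singleton, not_or] at hj
    exact mul_eq_zero_of_right _ <| det_of_vecCons_submatrix_skip3_eq_zero A h12 h23
      (hp₁ ▸ Fin.succAbove_right_injective.ne hj.1)
      (hp₂ ▸ Fin.succAbove_right_injective.ne hj.2.1)
      (hp₃ ▸ Fin.succAbove_right_injective.ne hj.2.2)

end Pluecker

/-- **Plücker three-term identity (column version).** For an `n × (n+2)` matrix `A` over a
commutative ring and columns `k₁ < k₂ < k₃ < k₄`, with `D[k,k']` the determinant of `A`
with columns `k, k'` deleted:
`D[k₁,k₂]·D[k₃,k₄] − D[k₁,k₃]·D[k₂,k₄] + D[k₁,k₄]·D[k₂,k₃] = 0`. -/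
theorem pluecker_columns {R : Type*} [CommRing R] {n : ℕ}
    (A : Matrix (Fin n) (Fin (n + 2)) R)
    (k₁ k₂ k₃ k₄ : Fin (n + 2)) (h12 : k₁ < k₂) (h23 : k₂ < k₃) (h34 : k₃ < k₄) :
    (A.submatrix id (skip2 k₁ k₂)).det * (A.submatrix id (skip2 k₃ k₄)).det -
      (A.submatrix id (skip2 k₁ k₃)).det * (A.submatrix id (skip2 k₂ k₄)).det +
      (A.submatrix id (skip2 k₁ k₄)).det * (A.submatrix id (skip2 k₂ k₃)).det = 0 := by
  obtain ⟨m, rfl⟩ : ∃ m, n = m + 1 := Nat.exists_eq_add_one.mpr (by omega)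
  have hsigned := pluecker_columns_signed A h12 h23 h34
  have s₁ : (-1 : R) ^ (k₁ : ℕ) * (-1) ^ (k₁ : ℕ) = 1 := by
    rw [← pow_add]; exact Even.neg_one_pow ⟨k₁, rfl⟩
  have s₂ : (-1 : R) ^ (k₂ : ℕ) * (-1) ^ ((k₂ : ℕ) - 1) = -1 := by
    rw [← pow_add]; exact Odd.neg_one_pow ⟨(k₂ : ℕ) - 1, by omega⟩
  have s₃ : (-1 : R) ^ (k₃ : ℕ) * (-1) ^ ((k₃ : ℕ) - 2) = 1 := by
    rw [← pow_add]; exact Even.neg_one_pow ⟨(k₃ : ℕ) - 1, by omega⟩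
  linear_combination hsigned
    - (A.submatrix id (skip2 k₁ k₄)).det * (A.submatrix id (skip2 k₂ k₃)).det * s₁
    - (A.submatrix id (skip2 k₁ k₃)).det * (A.submatrix id (skip2 k₂ k₄)).det * s₂
    - (A.submatrix id (skip2 k₁ k₂)).det * (A.submatrix id (skip2 k₃ k₄)).det * s₃
end

section
/- Mixed Plücker identity: Let A be an (n+1)×n matrix over a commutative ring, let j₁ < j₂ < j₃ be row indices and k₁ a column index. Writing D[rows; cols] for the determinant of A with the indicated rows and columns removed, one has D[j₁; ]·D[j₂,j₃; k₁] − D[j₂; ]·D[j₁,j₃; k₁] + D[j₃; ]·D[j₁,j₂; k₁] = 0. -/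
open Matrix

section Rows

variable {R : Type*} [CommRing R] {n : ℕ}

theorem sum_neg_one_pow_mul_det_submatrix_succAbove_smul_eq_zero
    (A : Matrix (Fin (n + 1)) (Fin n) R) :
    ∑ j : Fin (n + 1), ((-1) ^ (j : ℕ) * (A.submatrix j.succAbove id).det) • A j = 0 := by
  funext k
  let B : Matrix (Fin (n + 1)) (Fin (n + 1)) R := of fun i => Fin.cons (A i k) (A i)
  have hB : B.det = 0 := det_zero_of_column_eq (Fin.succ_ne_zero k) fun i => rfl
  rw [det_succ_column_zero] at hB
  simpa [mul_comm, mul_left_comm, mul_assoc, B, submatrix] using hB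

theorem det_of_cons_comp_succAbove (r : Fin (n + 1) → Fin (n + 1) → R) (p : Fin (n + 1)) :
    (of (Fin.cons (r p) (r ∘ p.succAbove))).det = (-1) ^ (p : ℕ) * (of r).det := by
  rw [det_succ_row_zero, det_succ_row _ p, Finset.mul_sum]
  refine Finset.sum_congr rfl fun c _ => ?_
  simp only [of_apply, Fin.cons_zero, Fin.cons_succ, submatrix, Function.comp_apply, pow_add]
  ring_nf
  rw [pow_mul', neg_one_sq, one_pow, mul_one]

theorem det_of_cons_eq_zero_of_mem_range {r : Fin n → Fin (n + 1) → R} {v : Fin (n + 1) → R}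
    (hv : v ∈ Set.range r) : (of (Fin.cons v r)).det = 0 := by
  obtain ⟨t, rfl⟩ := hv
  exact det_zero_of_row_eq (Fin.succ_ne_zero t).symm rfl

theorem sum_mul_det_of_cons_eq_zero {ι : Type*} [Fintype ι] (r : Fin n → Fin (n + 1) → R)
    (c : ι → R) (v : ι → Fin (n + 1) → R) (h : ∑ i, c i • v i = 0) :
    ∑ i, c i * (of (Fin.cons (v i) r)).det = 0 := by
  let φ := detRowAlternating.toMultilinearMap.toLinearMap (Fin.cons 0 r) 0
  have hφ : ∀ w, φ w = (of (Fin.cons w r)).det := fun w => by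
    rw [MultilinearMap.toLinearMap_apply, Fin.update_cons_zero]
    rfl
  have := congrArg φ h
  simp only [map_sum, map_smul, map_zero, smul_eq_mul] at this
  simpa only [hφ] using this

end Rows

section Skip

variable {n : ℕ}

theorem val_skip2 (a b : Fin (n + 2)) (i : Fin n) :
    (skip2 a b i : ℕ) =
      if (i : ℕ) < a then (i : ℕ) else if (i : ℕ) + 1 < b then (i : ℕ) + 1 else (i : ℕ) + 2 := by
  unfold skip2; split_ifs <;> rfl

theorem val_skip3 (a b c : Fin (n + 3)) (i : Fin n) :
    (skip3 a b c i : ℕ) = if (i : ℕ) < a then (i : ℕ) else if (i : ℕ) + 1 < b then (i : ℕ) + 1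
      else if (i : ℕ) + 2 < c then (i : ℕ) + 2 else (i : ℕ) + 3 := by
  unfold skip3; split_ifs <;> rfl

theorem val_succAbove (p : Fin (n + 1)) (i : Fin n) :
    (p.succAbove i : ℕ) = if (i : ℕ) < p then (i : ℕ) else (i : ℕ) + 1 := by
  unfold Fin.succAbove; split_ifs <;> simp_all [Fin.lt_def]

theorem mem_range_skip3 {a b c j : Fin (n + 3)} (hab : a < b) (hbc : b < c)
    (ha : j ≠ a) (hb : j ≠ b) (hc : j ≠ c) : j ∈ Set.range (skip3 a b c) := by
  simp only [ne_eq, Fin.ext_iff, Fin.lt_def] at *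
  have := c.isLt
  refine ⟨⟨if (j : ℕ) < a then j else if (j : ℕ) < b then j - 1
    else if (j : ℕ) < c then j - 2 else j - 3, by split_ifs <;> omega⟩, ?_⟩
  simp only [Fin.ext_iff, val_skip3]
  split_ifs <;> omega

end Skip

section Pluecker

variable {R : Type*} [CommRing R] {n : ℕ} (B : Matrix (Fin (n + 3)) (Fin (n + 1)) R)

theorem det_of_cons_comp_skip2_succAbove {x y j : Fin (n + 3)} {s : Fin n → Fin (n + 3)}
    (p : Fin (n + 1)) (hj : skip2 x y p = j) (hs : skip2 x y ∘ p.succAbove = s) :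
    (of (Fin.cons (B j) (B ∘ s))).det = (-1) ^ (p : ℕ) * (B.submatrix (skip2 x y) id).det := by
  subst hj hs
  exact det_of_cons_comp_succAbove (B ∘ skip2 x y) p

variable {a b c : Fin (n + 3)} (hab : a < b) (hbc : b < c)
include hab hbc

theorem det_of_cons_comp_skip3_fst :
    (of (Fin.cons (B a) (B ∘ skip3 a b c))).det =
      (-1) ^ (a : ℕ) * (B.submatrix (skip2 b c) id).det := by
  rw [Fin.lt_def] at hab hbc
  refine det_of_cons_comp_skip2_succAbove B ⟨a, by omega⟩ ?_ ?_
  · simp only [Fin.ext_iff, val_skip2]; split_ifs <;> omega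
  · ext t; simp only [Function.comp_apply, val_skip2, val_skip3, val_succAbove]; split_ifs <;> omega

theorem det_of_cons_comp_skip3_snd :
    (of (Fin.cons (B b) (B ∘ skip3 a b c))).det =
      -((-1) ^ (b : ℕ) * (B.submatrix (skip2 a c) id).det) := by
  rw [Fin.lt_def] at hab hbc
  obtain ⟨q, hq⟩ : ∃ q, (b : ℕ) = q + 1 := ⟨b - 1, by omega⟩
  rw [det_of_cons_comp_skip2_succAbove B ⟨q, by omega⟩, hq, pow_succ]
  · ring
  · simp only [Fin.ext_iff, val_skip2]; split_ifs <;> omega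
  · ext t; simp only [Function.comp_apply, val_skip2, val_skip3, val_succAbove]; split_ifs <;> omega

theorem det_of_cons_comp_skip3_thd :
    (of (Fin.cons (B c) (B ∘ skip3 a b c))).det =
      (-1) ^ (c : ℕ) * (B.submatrix (skip2 a b) id).det := by
  rw [Fin.lt_def] at hab hbc
  obtain ⟨q, hq⟩ : ∃ q, (c : ℕ) = q + 2 := ⟨c - 2, by omega⟩
  rw [det_of_cons_comp_skip2_succAbove B ⟨q, by omega⟩, hq, pow_add, neg_one_sq, mul_one]
  · simp only [Fin.ext_iff, val_skip2]; split_ifs <;> omega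
  · ext t; simp only [Function.comp_apply, val_skip2, val_skip3, val_succAbove]; split_ifs <;> omega

end Pluecker

/-- **Mixed Plücker identity.** For an `(n+1) × n` matrix `A` (here `n = m + 2 ≥ 2`) over a
commutative ring, rows `j₁ < j₂ < j₃` and a column `k₁`, writing `D[rows; cols]` for the
determinant of `A` with the indicated rows/columns removed:
`D[j₁;]·D[j₂,j₃;k₁] − D[j₂;]·D[j₁,j₃;k₁] + D[j₃;]·D[j₁,j₂;k₁] = 0`. -/
theorem pluecker_mixed_rows {R : Type*} [CommRing R] {m : ℕ}
    (A : Matrix (Fin (m + 3)) (Fin (m + 2)) R)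
    (j₁ j₂ j₃ : Fin (m + 3)) (k₁ : Fin (m + 2))
    (h12 : j₁ < j₂) (h23 : j₂ < j₃) :
    (A.submatrix j₁.succAbove id).det * (A.submatrix (skip2 j₂ j₃) k₁.succAbove).det -
      (A.submatrix j₂.succAbove id).det * (A.submatrix (skip2 j₁ j₃) k₁.succAbove).det +
      (A.submatrix j₃.succAbove id).det * (A.submatrix (skip2 j₁ j₂) k₁.succAbove).det = 0 := by
  set B := A.submatrix id k₁.succAbove
  have hcof : ∑ j : Fin (m + 3), ((-1) ^ (j : ℕ) * (A.submatrix j.succAbove id).det) • B j = 0 := by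
    funext c
    simpa [B] using
      congrFun (sum_neg_one_pow_mul_det_submatrix_succAbove_smul_eq_zero A) (k₁.succAbove c)
  have hsum := sum_mul_det_of_cons_eq_zero (B ∘ skip3 j₁ j₂ j₃) _ _ hcof
  rw [← Finset.sum_subset (Finset.subset_univ {j₁, j₂, j₃}), Finset.sum_insert, Finset.sum_insert,
    Finset.sum_singleton, det_of_cons_comp_skip3_fst B h12 h23,
    det_of_cons_comp_skip3_snd B h12 h23, det_of_cons_comp_skip3_thd B h12 h23] at hsum
  · ring_nf at hsum
    simpa only [pow_mul', neg_one_sq, one_pow, mul_one, B, submatrix_submatrix,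
      Function.comp_id, Function.id_comp] using hsum
  · simp [h23.ne]
  · simp [h12.ne, (h12.trans h23).ne]
  · intro j _ hj
    simp only [Finset.mem_insert, Finset.mem_singleton, not_or] at hj
    obtain ⟨t, ht⟩ := mem_range_skip3 h12 h23 hj.1 hj.2.1 hj.2.2
    rw [det_of_cons_eq_zero_of_mem_range ⟨t, congrArg B ht⟩, mul_zero]
end

section
/- Generalized Cauchy determinant (Moens–Van der Jeugt type): Let m ≥ n ≥ 0 and let z_{b₁},…,z_{b_m}, z_{f₁},…,z_{f_n} be elements of a field such that z_{b_i} ≠ z_{f_j} for all i,j. Consider the m×m matrix whose first n columns have entries 1/(z_{b_k} − z_{f_l}) for 1 ≤ k ≤ m, 1 ≤ l ≤ n, and whose remaining m−n columns have entries z_{b_k}^{l−1} for 1 ≤ l ≤ m−n. Then its determinant equals (−1)^{(m−n)(m+n−1)/2} · [∏_{1≤i<j≤m}(z_{b_i}−z_{b_j}) · ∏_{1≤i<j≤n}(z_{f_j}−z_{f_i})] / ∏_{i=1}^m ∏_{j=1}^n (z_{b_i}−z_{f_j}). -/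
/-!
Multiplying row `k` by `∏ j, (z_{b_k} - z_{f_j})` turns the matrix into `(P_l(z_{b_k}))_{k,l}`,
where `P_l = ∏_{t ≠ l} (X - z_{f_t})` for `l < n` and `P_{n+i} = X^i ∏_t (X - z_{f_t})`. All `P_l`
have degree `< m`, so this matrix is `V(z_b) * C` with `V` the Vandermonde matrix and `C` the
coefficient matrix of the `P_l`. The matrix `C` is block upper triangular with a unitriangular
lower-right block, and its upper-left block `C₀` satisfies
`V(z_f) * C₀ = diag (∏_{t ≠ l} (z_{f_l} - z_{f_t})) = ± V(z_f)²`, whence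
`det C = (-1)^(n(n-1)/2) det V(z_f)`. What remains is bookkeeping of signs.
-/

open Finset Polynomial Matrix

theorem Nat.triangle_add (n p : ℕ) :
    (n + p) * (n + p - 1) / 2 = n * (n - 1) / 2 + p * (2 * n + p - 1) / 2 := by
  induction p with
  | zero => simp
  | succ p ih =>
    have h : (p + 1) * (2 * n + (p + 1) - 1) = p * (2 * n + p - 1) + 2 * (n + p) := by
      rcases p with _ | p
      · simp
      · rw [show 2 * n + (p + 1 + 1) - 1 = 2 * n + p + 1 by omega,
          show 2 * n + (p + 1) - 1 = 2 * n + p by omega]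
        ring
    rw [← add_assoc, Nat.triangle_succ, ih, h, Nat.add_mul_div_left _ _ two_pos, add_assoc]

theorem prod_filter_lt_eq_prod_prod_Ioi {α M : Type*} [CommMonoid M] [LinearOrder α]
    [Fintype α] [LocallyFiniteOrderTop α] (f : α → α → M) :
    ∏ q ∈ univ.filter (fun q : α × α => q.1 < q.2), f q.1 q.2 = ∏ i, ∏ j ∈ Ioi i, f i j := by
  rw [prod_filter, ← univ_product_univ, prod_product]
  refine prod_congr rfl fun i _ => ?_
  rw [← prod_filter]
  congr 1
  ext j
  simp

theorem Fin.prod_prod_Ioi_const {M : Type*} [CommMonoid M] (N : ℕ) (c : M) :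
    ∏ i : Fin N, ∏ _j ∈ Ioi i, c = c ^ (N * (N - 1) / 2) := by
  induction N with
  | zero => simp
  | succ N ih =>
    rw [Fin.prod_univ_succ, Fin.prod_Ioi_zero]
    simp only [Fin.prod_Ioi_succ]
    rw [ih, Nat.triangle_succ, pow_add, mul_comm]
    simp

section CommRing

variable {R : Type*} [CommRing R]

theorem Fin.prod_prod_Ioi_neg {N : ℕ} (f : Fin N → Fin N → R) :
    ∏ i, ∏ j ∈ Ioi i, -f i j = (-1) ^ (N * (N - 1) / 2) * ∏ i, ∏ j ∈ Ioi i, f i j := by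
  simp_rw [neg_eq_neg_one_mul (f _ _), prod_mul_distrib, Fin.prod_prod_Ioi_const]

theorem prod_prod_Ioi_sub_eq_neg_one_pow_mul_det_vandermonde {N : ℕ} (v : Fin N → R) :
    ∏ i, ∏ j ∈ Ioi i, (v i - v j) = (-1) ^ (N * (N - 1) / 2) * (vandermonde v).det := by
  rw [det_vandermonde, ← Fin.prod_prod_Ioi_neg]
  simp_rw [neg_sub]

theorem prod_prod_erase_sub_eq_neg_one_pow_mul_det_vandermonde_sq {N : ℕ} (v : Fin N → R) :
    ∏ i, ∏ j ∈ univ.erase i, (v i - v j) =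
      (-1) ^ (N * (N - 1) / 2) * (vandermonde v).det ^ 2 := by
  simp_rw [← compl_singleton]
  rw [← prod_prod_Ioi_mul_eq_prod_prod_off_diag (fun a b => v b - v a)]
  simp_rw [show ∀ i j, (v i - v j) * (v j - v i) = -((v j - v i) * (v j - v i)) by
    intros; ring]
  rw [Fin.prod_prod_Ioi_neg, det_vandermonde, sq]
  simp_rw [prod_mul_distrib]

def coeffMatrix {N : ℕ} (P : Fin N → R[X]) : Matrix (Fin N) (Fin N) R :=
  of fun j l => (P l).coeff j

theorem of_eval_eq_vandermonde_mul_coeffMatrix {N : ℕ} (v : Fin N → R) (P : Fin N → R[X])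
    (hP : ∀ l, (P l).natDegree < N) :
    of (fun k l => (P l).eval (v k)) = vandermonde v * coeffMatrix P := by
  ext k l
  rw [of_apply, eval_eq_sum_range' (hP l), mul_apply, ← Fin.sum_univ_eq_sum_range]
  simp only [vandermonde_apply, coeffMatrix, of_apply, mul_comm]

theorem det_coeffMatrix_append_X_pow_mul {n p : ℕ} (P : Fin n → R[X])
    (hP : ∀ l, (P l).natDegree < n) {Q : R[X]} (hQ : Q.Monic) (hQn : Q.natDegree = n) :
    (coeffMatrix (Fin.append P fun i : Fin p => X ^ (i : ℕ) * Q)).det = (coeffMatrix P).det := by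
  have hlow : ∀ (l : Fin n) (j : ℕ), (P l).coeff (n + j) = 0 := fun l j =>
    coeff_eq_zero_of_natDegree_lt (by have := hP l; omega)
  have hblocks : (coeffMatrix (Fin.append P fun i : Fin p => X ^ (i : ℕ) * Q)).submatrix
      finSumFinEquiv finSumFinEquiv = fromBlocks (coeffMatrix P)
        (of fun (j : Fin n) (i : Fin p) => (X ^ (i : ℕ) * Q).coeff j) 0
        (of fun j i : Fin p => (X ^ (i : ℕ) * Q).coeff (n + j)) := by
    ext (j | j) (l | l) <;> simp [coeffMatrix, hlow]
  have htri : (of fun j i : Fin p => (X ^ (i : ℕ) * Q).coeff (n + j)).IsUpperTriangular := by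
    intro j i (hij : i < j)
    simp only [of_apply, coeff_X_pow_mul']
    split_ifs
    · exact coeff_eq_zero_of_natDegree_lt (by rw [hQn]; omega)
    · rfl
  rw [← det_submatrix_equiv_self finSumFinEquiv, hblocks, det_fromBlocks_zero₂₁,
    det_of_isUpperTriangular htri]
  simp [coeff_X_pow_mul', ← hQn, hQ.coeff_natDegree]

theorem natDegree_prod_erase_X_sub_C_lt [Nontrivial R] {N : ℕ} (v : Fin N → R) (l : Fin N) :
    (∏ t ∈ univ.erase l, (X - C (v t))).natDegree < N := by
  rw [natDegree_finsetProd_X_sub_C_eq_card, card_erase_of_mem (mem_univ l), card_univ,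
    Fintype.card_fin]
  exact Nat.sub_lt l.pos one_pos

theorem prod_erase_X_sub_C_eq_of_eq [IsDomain R] {N : ℕ} {v : Fin N → R} {a b : Fin N}
    (hab : v a = v b) :
    ∏ t ∈ univ.erase a, (X - C (v t)) = ∏ t ∈ univ.erase b, (X - C (v t)) := by
  refine mul_left_cancel₀ (X_sub_C_ne_zero (v a)) ?_
  rw [mul_prod_erase univ (fun t => X - C (v t)) (mem_univ a), hab,
    mul_prod_erase univ (fun t => X - C (v t)) (mem_univ b)]

theorem det_coeffMatrix_prod_erase_X_sub_C [IsDomain R] {N : ℕ} (v : Fin N → R) :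
    (coeffMatrix fun l => ∏ t ∈ univ.erase l, (X - C (v t))).det =
      (-1) ^ (N * (N - 1) / 2) * (vandermonde v).det := by
  by_cases hv : Function.Injective v
  · have hdiag : vandermonde v * coeffMatrix (fun l => ∏ t ∈ univ.erase l, (X - C (v t))) =
        diagonal fun l => ∏ t ∈ univ.erase l, (v l - v t) := by
      rw [← of_eval_eq_vandermonde_mul_coeffMatrix v _ (natDegree_prod_erase_X_sub_C_lt v)]
      ext k l
      rcases eq_or_ne k l with rfl | hkl
      · simp [eval_prod]
      · simp only [of_apply, eval_prod, eval_sub, eval_X, eval_C, diagonal_apply_ne _ hkl]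
        exact prod_eq_zero (mem_erase.mpr ⟨hkl, mem_univ k⟩) (sub_self _)
    refine mul_left_cancel₀ (det_vandermonde_ne_zero_iff.mpr hv) ?_
    rw [← det_mul, hdiag, det_diagonal,
      prod_prod_erase_sub_eq_neg_one_pow_mul_det_vandermonde_sq]
    ring
  · obtain ⟨a, b, hab, hne⟩ := Function.not_injective_iff.mp hv
    rw [det_vandermonde_eq_zero_iff.mpr ⟨a, b, hab, hne⟩, mul_zero]
    exact det_zero_of_column_eq hne fun j => by
      rw [coeffMatrix, of_apply, of_apply, prod_erase_X_sub_C_eq_of_eq hab]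

noncomputable def cauchyColumnPoly {n : ℕ} (v : Fin n → R) (p : ℕ) : Fin (n + p) → R[X] :=
  Fin.append (fun l => ∏ t ∈ univ.erase l, (X - C (v t)))
    fun i : Fin p => X ^ (i : ℕ) * ∏ t, (X - C (v t))

theorem natDegree_cauchyColumnPoly_lt [Nontrivial R] {n p : ℕ} (v : Fin n → R)
    (l : Fin (n + p)) : (cauchyColumnPoly v p l).natDegree < n + p := by
  refine Fin.addCases (fun l => ?_) (fun i => ?_) l
  · rw [cauchyColumnPoly, Fin.append_left]
    exact (natDegree_prod_erase_X_sub_C_lt v l).trans_le (Nat.le_add_right n p)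
  · rw [cauchyColumnPoly, Fin.append_right,
      (monic_X_pow _).natDegree_mul (monic_prod_X_sub_C v univ), natDegree_X_pow,
      natDegree_finsetProd_X_sub_C_eq_card, card_univ, Fintype.card_fin]
    omega

theorem det_coeffMatrix_cauchyColumnPoly [IsDomain R] {n p : ℕ} (v : Fin n → R) :
    (coeffMatrix (cauchyColumnPoly v p)).det = (-1) ^ (n * (n - 1) / 2) * (vandermonde v).det := by
  rw [cauchyColumnPoly, det_coeffMatrix_append_X_pow_mul _ (natDegree_prod_erase_X_sub_C_lt v)
    (monic_prod_X_sub_C v univ) (by simp), det_coeffMatrix_prod_erase_X_sub_C]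

end CommRing

theorem diagonal_mul_cauchy_vandermonde {K : Type*} [Field K] {n p : ℕ}
    (zb : Fin (n + p) → K) (zf : Fin n → K) (hbf : ∀ i j, zb i ≠ zf j) :
    diagonal (fun k => ∏ j, (zb k - zf j)) * (of fun k l : Fin (n + p) =>
        if h : (l : ℕ) < n then (zb k - zf ⟨(l : ℕ), h⟩)⁻¹ else zb k ^ ((l : ℕ) - n)) =
      of fun k l => (cauchyColumnPoly zf p l).eval (zb k) := by
  ext k l
  refine Fin.addCases (fun l => ?_) (fun i => ?_) l
  · simp only [diagonal_mul, of_apply, Fin.val_castAdd, l.isLt, dif_pos, Fin.eta,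
      cauchyColumnPoly, Fin.append_left, eval_prod, eval_sub, eval_X, eval_C]
    rw [← mul_prod_erase univ _ (mem_univ l), mul_comm,
      inv_mul_cancel_left₀ (sub_ne_zero.mpr (hbf k l))]
  · simp [cauchyColumnPoly, diagonal_mul, eval_prod, mul_comm]

/-- **Generalized Cauchy determinant (Moens–Van der Jeugt type).** Let `m = n + p ≥ n` and
let `z_{b₁},…,z_{b_m}, z_{f₁},…,z_{f_n}` be field elements with `z_{b_i} ≠ z_{f_j}` for all
`i, j`. The `m × m` matrix whose first `n` columns are the Cauchy block
`1/(z_{b_k} − z_{f_l})` and whose remaining `m − n` columns are the Vandermonde block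
`z_{b_k}^{l−1}` has determinant
`(−1)^{(m−n)(m+n−1)/2} · ∏_{i<j}(z_{b_i}−z_{b_j}) · ∏_{i<j}(z_{f_j}−z_{f_i}) /
∏_{i,j}(z_{b_i}−z_{f_j})`. -/
theorem generalized_cauchy_det {K : Type*} [Field K] {n p : ℕ}
    (zb : Fin (n + p) → K) (zf : Fin n → K)
    (hbf : ∀ i j, zb i ≠ zf j) :
    (Matrix.of fun k l : Fin (n + p) =>
        if h : (l : ℕ) < n then (zb k - zf ⟨(l : ℕ), h⟩)⁻¹ else zb k ^ ((l : ℕ) - n)).det =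
      (-1 : K) ^ (p * (2 * n + p - 1) / 2) *
        ((∏ q ∈ Finset.univ.filter (fun q : Fin (n + p) × Fin (n + p) => q.1 < q.2),
            (zb q.1 - zb q.2)) *
          (∏ q ∈ Finset.univ.filter (fun q : Fin n × Fin n => q.1 < q.2),
            (zf q.2 - zf q.1))) /
        (∏ i, ∏ j, (zb i - zf j)) := by
  have hdet := congrArg det (diagonal_mul_cauchy_vandermonde zb zf hbf)
  rw [det_mul, det_diagonal, of_eval_eq_vandermonde_mul_coeffMatrix _ _
    (natDegree_cauchyColumnPoly_lt zf), det_mul, det_coeffMatrix_cauchyColumnPoly] at hdet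
  have hD : (∏ i, ∏ j, (zb i - zf j)) ≠ 0 :=
    prod_ne_zero_iff.mpr fun i _ => prod_ne_zero_iff.mpr fun j _ => sub_ne_zero.mpr (hbf i j)
  rw [eq_div_iff hD, prod_filter_lt_eq_prod_prod_Ioi (fun a b => zb a - zb b),
    prod_filter_lt_eq_prod_prod_Ioi (fun a b => zf b - zf a), ← det_vandermonde,
    prod_prod_Ioi_sub_eq_neg_one_pow_mul_det_vandermonde, Nat.triangle_add, pow_add]
  have hsq : (-1 : K) ^ (p * (2 * n + p - 1) / 2) * (-1) ^ (p * (2 * n + p - 1) / 2) = 1 := by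
    simp [← mul_pow]
  linear_combination hdet -
    (-1 : K) ^ (n * (n - 1) / 2) * (vandermonde zb).det * (vandermonde zf).det * hsq
end

section
/- With D(b's; f's) as in the generalized Cauchy product expression, for additional indices α appended to the first list and β appended to the second list (all needed differences nonzero): D(b₁,…,b_m,α; f₁,…,f_n) · D(b₁,…,b_m; f₁,…,f_n,β) = (z_α − z_β) · D(b₁,…,b_m; f₁,…,f_n) · D(b₁,…,b_m,α; f₁,…,f_n,β). -/
/-!
Appending a point `a` to the first list multiplies `D` by `∏ᵢ (z_{b_i} − a) / ∏ⱼ (a − z_{f_j})`,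
and appending `b` to the second list multiplies it by `∏ⱼ (b − z_{f_j}) / ∏ᵢ (z_{b_i} − b)`.
Appending both produces both factors together with one extra denominator entry `a − b`, the
cross term of the two new points, which is exactly what the prefactor `z_α − z_β` cancels.
-/

/-- The generalized Cauchy expression
`D(b₁,…,b_m; f₁,…,f_n) = ∏_{i<j}(z_{b_i}−z_{b_j}) ∏_{i<j}(z_{f_j}−z_{f_i}) /
∏_{i,j}(z_{b_i}−z_{f_j})`. -/
def Dfun {K : Type*} [Field K] {m n : ℕ} (zb : Fin m → K) (zf : Fin n → K) : K :=
  ((∏ q ∈ Finset.univ.filter (fun q : Fin m × Fin m => q.1 < q.2), (zb q.1 - zb q.2)) *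
    (∏ q ∈ Finset.univ.filter (fun q : Fin n × Fin n => q.1 < q.2), (zf q.2 - zf q.1))) /
    (∏ i, ∏ j, (zb i - zf j))

theorem Fin.prod_lt_pairs_castSucc {M : Type*} [CommMonoid M] {N : ℕ}
    (g : Fin (N + 1) × Fin (N + 1) → M) :
    ∏ q ∈ Finset.univ.filter (fun q : Fin (N + 1) × Fin (N + 1) => q.1 < q.2), g q =
      (∏ q ∈ Finset.univ.filter (fun q : Fin N × Fin N => q.1 < q.2),
          g (q.1.castSucc, q.2.castSucc)) *
        ∏ i : Fin N, g (i.castSucc, Fin.last N) := by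
  simp only [Finset.prod_filter, Fintype.prod_prod_type, Fin.prod_univ_castSucc,
    Fin.castSucc_lt_castSucc_iff, Fin.castSucc_lt_last, if_true, lt_irrefl, if_false,
    not_lt.mpr (Fin.le_last _), Finset.prod_const_one, mul_one, Finset.prod_mul_distrib]

theorem Dfun_snoc_left {K : Type*} [Field K] {m n : ℕ} (zb : Fin m → K) (zf : Fin n → K)
    (a : K) :
    Dfun (Fin.snoc zb a) zf = Dfun zb zf * ((∏ i, (zb i - a)) / ∏ j, (a - zf j)) := by
  simp only [Dfun, Fin.prod_lt_pairs_castSucc, Fin.prod_univ_castSucc, Fin.snoc_castSucc,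
    Fin.snoc_last]
  ring

theorem Dfun_snoc_right {K : Type*} [Field K] {m n : ℕ} (zb : Fin m → K) (zf : Fin n → K)
    (b : K) :
    Dfun zb (Fin.snoc zf b) = Dfun zb zf * ((∏ j, (b - zf j)) / ∏ i, (zb i - b)) := by
  simp only [Dfun, Fin.prod_lt_pairs_castSucc, Fin.prod_univ_castSucc, Fin.snoc_castSucc,
    Fin.snoc_last, Finset.prod_mul_distrib]
  ring

theorem Dfun_snoc_snoc {K : Type*} [Field K] {m n : ℕ} (zb : Fin m → K) (zf : Fin n → K)
    (a b : K) :
    Dfun (Fin.snoc zb a) (Fin.snoc zf b) =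
      Dfun zb zf * ((∏ j, (b - zf j)) / ∏ i, (zb i - b)) *
        ((∏ i, (zb i - a)) / ∏ j, (a - zf j)) / (a - b) := by
  rw [Dfun_snoc_left, Dfun_snoc_right, Fin.prod_univ_castSucc]
  simp only [Fin.snoc_castSucc, Fin.snoc_last]
  rw [div_mul_eq_div_div]
  ring

theorem Dfun_append_mixed_general {K : Type*} [Field K] {m n : ℕ}
    (zb : Fin m → K) (zf : Fin n → K) (zα zβ : K)
    (hαβ : zα ≠ zβ) :
    Dfun (Fin.snoc zb zα) zf * Dfun zb (Fin.snoc zf zβ) =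
      (zα - zβ) * (Dfun zb zf * Dfun (Fin.snoc zb zα) (Fin.snoc zf zβ)) := by
  have hαβ' : zα - zβ ≠ 0 := sub_ne_zero.mpr hαβ
  rw [Dfun_snoc_snoc, Dfun_snoc_left, Dfun_snoc_right]
  field_simp

/-- Appending `α` to the first list and `β` to the second list:
`D(b,α;f) · D(b;f,β) = (z_α − z_β) · D(b;f) · D(b,α;f,β)`. -/
theorem Dfun_append_mixed {K : Type*} [Field K] {m n : ℕ}
    (zb : Fin m → K) (zf : Fin n → K) (zα zβ : K)
    (hbf : ∀ i j, zb i ≠ zf j) (hαf : ∀ j, zα ≠ zf j) (hbβ : ∀ i, zb i ≠ zβ)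
    (hαβ : zα ≠ zβ) :
    Dfun (Fin.snoc zb zα) zf * Dfun zb (Fin.snoc zf zβ) =
      (zα - zβ) * (Dfun zb zf * Dfun (Fin.snoc zb zα) (Fin.snoc zf zβ)) :=
  Dfun_append_mixed_general zb zf zα zβ hαβ
end

section
/- Rank-deficiency of the conserved-quantity matrix: Let S be a finite set with |S| = N, and for each I ∈ S let c_I, w_I ∈ K be scalars and f_I, g_I : K → K functions. For s ∈ ℤ and x ∈ K define T(s', u) := Σ_{I∈S} c_I w_I^{s'} f_I(u q^{−s'}) g_I(u q^{s'}), where q ∈ K is a fixed nonzero element. Then for any s ∈ ℤ and x ∈ K, the (N+1)×(N+1) matrix M with entries M_{ij} = T(s+i+j, x q^{i−j}) for i,j ∈ {1,…,N+1} has determinant zero. -/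
/-!
Each summand of `T(s + a + b, x q^(a - b))` splits as a product of a factor depending only on
`a` and one depending only on `b`, because the arguments `x q^(a-b) q^(∓(s+a+b))` of `f_I` and
`g_I` lose their dependence on `a`, resp. `b`. So the matrix factors through `K^N`, and an
`(N+1) × (N+1)` matrix of rank at most `N` is singular.
-/

theorem Matrix.det_mul_eq_zero_of_card_lt {K m n : Type*} [Field K] [Fintype m] [Fintype n]
    [DecidableEq n] (A : Matrix n m K) (B : Matrix m n K) (h : Fintype.card m < Fintype.card n) :
    (A * B).det = 0 := by
  by_contra hdet
  have hrank : (A * B).rank = Fintype.card n :=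
    (A * B).rank_of_isUnit ((A * B).isUnit_iff_isUnit_det.mpr (Ne.isUnit hdet))
  have := (A.rank_mul_le_left B).trans A.rank_le_card_width
  omega

theorem conserved_sum_add_add_eq_sum_mul {K ι : Type*} [Field K] [Fintype ι]
    {q : K} (hq : q ≠ 0) {c w : ι → K} (hw : ∀ I, w I ≠ 0) (f g : ι → K → K)
    (s a b : ℤ) (x : K) :
    ∑ I, c I * w I ^ (s + a + b) * f I (x * q ^ (a - b) * q ^ (-(s + a + b)))
        * g I (x * q ^ (a - b) * q ^ (s + a + b)) =
      ∑ I, c I * w I ^ (s + a) * g I (x * q ^ (s + 2 * a))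
        * (w I ^ b * f I (x * q ^ (-s - 2 * b))) := by
  refine Finset.sum_congr rfl fun I _ => ?_
  have hf : x * q ^ (a - b) * q ^ (-(s + a + b)) = x * q ^ (-s - 2 * b) := by
    rw [mul_assoc, ← zpow_add₀ hq]
    ring_nf
  have hg : x * q ^ (a - b) * q ^ (s + a + b) = x * q ^ (s + 2 * a) := by
    rw [mul_assoc, ← zpow_add₀ hq]
    ring_nf
  rw [hf, hg, zpow_add₀ (hw I)]
  ring

/-- **Rank deficiency of the conserved-quantity matrix.** Let `S` be a finite set of
cardinality `N` (modelled by `Fin N`), and for each `I` let `c_I, w_I ∈ K` (with `w_I ≠ 0`)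
and `f_I, g_I : K → K`. Define
`T(s', u) = Σ_I c_I w_I^{s'} f_I(u q^{−s'}) g_I(u q^{s'})` for a fixed nonzero `q`. Then for
any `s ∈ ℤ` and `x ∈ K`, the `(N+1) × (N+1)` matrix with entries
`M_{ij} = T(s + i + j, x q^{i−j})`, `i, j ∈ {1,…,N+1}`, has determinant zero. -/
theorem conserved_matrix_det_zero {K : Type*} [Field K] {N : ℕ}
    (q : K) (hq : q ≠ 0) (c w : Fin N → K) (hw : ∀ I, w I ≠ 0)
    (f g : Fin N → K → K) (T : ℤ → K → K)
    (hT : ∀ (s' : ℤ) (u : K),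
        T s' u = ∑ I, c I * w I ^ s' * f I (u * q ^ (-s')) * g I (u * q ^ s'))
    (s : ℤ) (x : K) :
    (Matrix.of fun i j : Fin (N + 1) =>
        T (s + ((i : ℕ) + 1 : ℤ) + ((j : ℕ) + 1 : ℤ))
          (x * q ^ (((i : ℕ) : ℤ) - ((j : ℕ) : ℤ)))).det = 0 := by
  let A : Matrix (Fin (N + 1)) (Fin N) K := Matrix.of fun i I =>
    c I * w I ^ (s + ((i : ℕ) + 1 : ℤ)) * g I (x * q ^ (s + 2 * ((i : ℕ) + 1 : ℤ)))
  let B : Matrix (Fin N) (Fin (N + 1)) K := Matrix.of fun I j =>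
    w I ^ ((j : ℕ) + 1 : ℤ) * f I (x * q ^ (-s - 2 * ((j : ℕ) + 1 : ℤ)))
  have hAB : (Matrix.of fun i j : Fin (N + 1) =>
      T (s + ((i : ℕ) + 1 : ℤ) + ((j : ℕ) + 1 : ℤ))
        (x * q ^ (((i : ℕ) : ℤ) - ((j : ℕ) : ℤ)))) = A * B := by
    ext i j
    have hexp : ((i : ℕ) : ℤ) - ((j : ℕ) : ℤ) = ((i : ℕ) + 1 : ℤ) - ((j : ℕ) + 1 : ℤ) := by ring
    rw [Matrix.of_apply, hT, hexp, conserved_sum_add_add_eq_sum_mul hq hw, Matrix.mul_apply]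
    rfl
  rw [hAB]
  exact Matrix.det_mul_eq_zero_of_card_lt A B (by simp)
end

section
/- Gauge/level invariance of the transfer-matrix summand: Let K be a field, q, z_i, z_j ∈ K, and let Q_I, Q_{Ii}, Q_{Ij}, Q_{Iij} : K → K satisfy the bosonic QQ-relation (z_i − z_j) Q_I(u) Q_{Iij}(u) = z_i Q_{Ii}(uq) Q_{Ij}(uq^{−1}) − z_j Q_{Ii}(uq^{−1}) Q_{Ij}(uq) for all u. Then for every u at which all denominators below are nonzero: z_i Q_I(uq^{−1}) Q_{Ii}(uq²) / (Q_I(uq) Q_{Ii}(u)) + z_j Q_{Ii}(uq^{−2}) Q_{Iij}(uq) / (Q_{Ii}(u) Q_{Iij}(uq^{−1})) = z_j Q_I(uq^{−1}) Q_{Ij}(uq²) / (Q_I(uq) Q_{Ij}(u)) + z_i Q_{Ij}(uq^{−2}) Q_{Iij}(uq) / (Q_{Ij}(u) Q_{Iij}(uq^{−1})). -/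
/-!
The QQ-relation at `uq` says that the `zᵢ`-summand minus the `zⱼ`-summand containing `Q_I` equals
`(zᵢ - zⱼ) Q_I(uq⁻¹) Q_{Iij}(uq) / (Q_{Ii}(u) Q_{Ij}(u))`; the QQ-relation at `uq⁻¹` says the same
for the two summands containing `Q_{Iij}`.
-/

section QQRelation

variable {K : Type*} [Field K] {zi zj a b b' c c' d : K}

theorem qq_relation_div_a (h : (zi - zj) * a * d = zi * b' * c - zj * b * c')
    (ha : a ≠ 0) (hb : b ≠ 0) (hc : c ≠ 0) (x : K) :
    zi * x * b' / (a * b) - zj * x * c' / (a * c) = (zi - zj) * x * d / (b * c) := by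
  field_simp
  linear_combination (-x) * h

theorem qq_relation_div_d (h : (zi - zj) * a * d = zi * b * c' - zj * b' * c)
    (hb : b ≠ 0) (hc : c ≠ 0) (hd : d ≠ 0) (y : K) :
    zi * c' * y / (c * d) - zj * b' * y / (b * d) = (zi - zj) * a * y / (b * c) := by
  field_simp
  linear_combination (-y) * h

end QQRelation

/-- **Gauge/level invariance of the transfer-matrix summand.** Given the bosonic
QQ-relation
`(zᵢ − zⱼ) Q_I(u) Q_{Iij}(u) = zᵢ Q_{Ii}(uq) Q_{Ij}(uq⁻¹) − zⱼ Q_{Ii}(uq⁻¹) Q_{Ij}(uq)`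
for all `u`, and nonvanishing of the relevant denominators, one has
`zᵢ Q_I(uq⁻¹) Q_{Ii}(uq²)/(Q_I(uq) Q_{Ii}(u)) + zⱼ Q_{Ii}(uq⁻²) Q_{Iij}(uq)/(Q_{Ii}(u) Q_{Iij}(uq⁻¹))
 = zⱼ Q_I(uq⁻¹) Q_{Ij}(uq²)/(Q_I(uq) Q_{Ij}(u)) + zᵢ Q_{Ij}(uq⁻²) Q_{Iij}(uq)/(Q_{Ij}(u) Q_{Iij}(uq⁻¹))`. -/
theorem summand_gauge_invariance {K : Type*} [Field K]
    (q zi zj : K) (hq : q ≠ 0) (QI QIi QIj QIij : K → K)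
    (hrel : ∀ u, (zi - zj) * QI u * QIij u =
        zi * QIi (u * q) * QIj (u * q⁻¹) - zj * QIi (u * q⁻¹) * QIj (u * q))
    (u : K)
    (h1 : QI (u * q) ≠ 0) (h2 : QIi u ≠ 0) (h3 : QIj u ≠ 0) (h4 : QIij (u * q⁻¹) ≠ 0) :
    zi * QI (u * q⁻¹) * QIi (u * q * q) / (QI (u * q) * QIi u) +
        zj * QIi (u * q⁻¹ * q⁻¹) * QIij (u * q) / (QIi u * QIij (u * q⁻¹)) =
      zj * QI (u * q⁻¹) * QIj (u * q * q) / (QI (u * q) * QIj u) +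
        zi * QIj (u * q⁻¹ * q⁻¹) * QIij (u * q) / (QIj u * QIij (u * q⁻¹)) := by
  have hup := hrel (u * q)
  rw [mul_inv_cancel_right₀ hq] at hup
  have hdown := hrel (u * q⁻¹)
  rw [inv_mul_cancel_right₀ hq] at hdown
  have first := qq_relation_div_a hup h1 h2 h3 (QI (u * q⁻¹))
  have second := qq_relation_div_d hdown h2 h3 h4 (QIij (u * q))
  linear_combination first - second
end
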